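/- Let R = k[x,y] with deg(x) = a, deg(y) = b, g = gcd(a,b) and a' = a/g, b' = b/g. For α, β, α', β' ∈ k^×, the graded modules R/(β x^{b'} − α y^{a'}) and R/(β' x^{b'} − α' y^{a'}) are isomorphic as graded R-modules if and only if (α : β) = (α' : β') as points of ℙ¹, i.e., αβ' = α'β. -/
import Mathlib


open MvPolynomial

/-- The degree-`n` piece of the quotient of the weighted polynomial ring
`k[x,y]` (with `deg x = a`, `deg y = b`) by an ideal `I`. -/
noncomputable def wPiece (k : Type*) [Field k] (a b : ℕ) (I : Ideal (MvPolynomial (Fin 2) k))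
    (n : ℕ) : Submodule k (MvPolynomial (Fin 2) k ⧸ I) :=
  (weightedHomogeneousSubmodule k (![a, b] : Fin 2 → ℕ) n).map
    (Ideal.Quotient.mkₐ k I).toLinearMap

theorem aux_const (k : Type*) [Field k] (a b : ℕ) (ha : 0 < a) (hb : 0 < b)
    (p : MvPolynomial (Fin 2) k) (hp : p ∈ weightedHomogeneousSubmodule k (![a, b] : Fin 2 → ℕ) 0) :
    ∃ c : k, p = C c := by
  refine ⟨coeff 0 p, ?_⟩
  ext d
  rw [mem_weightedHomogeneousSubmodule] at hp
  by_cases hd : d = 0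
  · subst hd; simp [coeff_C]
  · rw [coeff_C, if_neg (Ne.symm hd)]
    by_contra h
    have h0 := hp h
    rw [Finsupp.weight_apply, Finsupp.sum, Finset.sum_eq_zero_iff] at h0
    apply hd
    ext i
    by_contra hdi
    have hi : i ∈ d.support := Finsupp.mem_support_iff.mpr (by simpa using hdi)
    have h1 := h0 i hi
    have hw : 0 < (![a,b] : Fin 2 → ℕ) i := by fin_cases i <;> simpa
    have : d i = 0 := (Nat.mul_eq_zero.mp (by simpa [smul_eq_mul] using h1)).resolve_right hw.ne'
    exact hdi (by simpa using this)

theorem aux_dvd (k : Type*) [Field k] [IsAlgClosed k] (a' b' : ℕ) (hb' : 0 < b')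
    (α β α' β' : k) (hβ : β ≠ 0)
    (h : (C β * X 0 ^ b' - C α * X 1 ^ a' : MvPolynomial (Fin 2) k) ∣
         (C β' * X 0 ^ b' - C α' * X 1 ^ a')) :
    α * β' = α' * β := by
  obtain ⟨t, ht⟩ := IsAlgClosed.exists_pow_nat_eq (α * β⁻¹) hb'
  obtain ⟨q, hq⟩ := h
  have h2 := congrArg (MvPolynomial.eval (![t, 1] : Fin 2 → k)) hq
  simp [ht] at h2
  have hβα : β * (α * β⁻¹) = α := by field_simp
  rw [hβα, sub_self, zero_mul, sub_eq_zero] at h2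
  field_simp at h2
  linear_combination h2

theorem aux_eq (k : Type*) [Field k] (a b : ℕ) (I I' : Ideal (MvPolynomial (Fin 2) k))
    (h : I = I') (n : ℕ) (x : MvPolynomial (Fin 2) k ⧸ I) :
    x ∈ wPiece k a b I n ↔
      (Ideal.quotientEquivAlgOfEq (MvPolynomial (Fin 2) k) h).toLinearEquiv x ∈
        wPiece k a b I' n := by
  subst h
  obtain ⟨p, rfl⟩ := Ideal.Quotient.mk_surjective x
  rw [AlgEquiv.toLinearEquiv_apply, Ideal.quotientEquivAlgOfEq_mk]

/-- `R/(β x^{b'} − α y^{a'}) ≅ R/(β' x^{b'} − α' y^{a'})` as graded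
`R`-modules if and only if `(α : β) = (α' : β')` in `ℙ¹`, i.e. `αβ' = α'β`. -/
theorem stmt4 (k : Type*) [Field k] [IsAlgClosed k] (a b : ℕ) (ha : 0 < a) (hb : 0 < b)
    (α β α' β' : k) (hα : α ≠ 0) (hβ : β ≠ 0) (hα' : α' ≠ 0) (hβ' : β' ≠ 0) :
    (∃ e : (MvPolynomial (Fin 2) k ⧸
          Ideal.span {C β * MvPolynomial.X 0 ^ (b / Nat.gcd a b) -
            C α * MvPolynomial.X 1 ^ (a / Nat.gcd a b)}) ≃ₗ[MvPolynomial (Fin 2) k]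
        (MvPolynomial (Fin 2) k ⧸
          Ideal.span {C β' * MvPolynomial.X 0 ^ (b / Nat.gcd a b) -
            C α' * MvPolynomial.X 1 ^ (a / Nat.gcd a b)}),
      ∀ (n : ℕ) x,
        x ∈ wPiece k a b (Ideal.span {C β * MvPolynomial.X 0 ^ (b / Nat.gcd a b) -
            C α * MvPolynomial.X 1 ^ (a / Nat.gcd a b)}) n ↔
        e x ∈ wPiece k a b (Ideal.span {C β' * MvPolynomial.X 0 ^ (b / Nat.gcd a b) -
            C α' * MvPolynomial.X 1 ^ (a / Nat.gcd a b)}) n) ↔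
      α * β' = α' * β := by
  set b' := b / Nat.gcd a b with hb'def
  set a' := a / Nat.gcd a b with ha'def
  set f : MvPolynomial (Fin 2) k := C β * X 0 ^ b' - C α * X 1 ^ a' with hf
  set f' : MvPolynomial (Fin 2) k := C β' * X 0 ^ b' - C α' * X 1 ^ a' with hf'
  have hb'pos : 0 < b' := Nat.div_pos (Nat.le_of_dvd hb (Nat.gcd_dvd_right a b))
    (Nat.gcd_pos_of_pos_right a hb)
  set I := Ideal.span {f} with hI
  set I' := Ideal.span {f'} with hI'
  constructor
  · rintro ⟨e, he⟩
    -- 1 is in the degree-0 piece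
    have h1mem : (Ideal.Quotient.mk I 1) ∈ wPiece k a b I 0 := by
      refine ⟨1, ?_, by simp⟩
      exact mem_weightedHomogeneousSubmodule _ _ _ _ |>.mpr
        (isWeightedHomogeneous_one k _)
    have h2 := (he 0 (Ideal.Quotient.mk I 1)).mp h1mem
    obtain ⟨p, hp, hpe⟩ := h2
    obtain ⟨c, rfl⟩ := aux_const k a b ha hb p hp
    -- e (mk f') = mk (f' * C c) = 0
    have hsm : ∀ (J : Ideal (MvPolynomial (Fin 2) k)) (r x : MvPolynomial (Fin 2) k),
        r • (Ideal.Quotient.mk J x) = Ideal.Quotient.mk J (r * x) := fun _ _ _ => rfl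
    have hkey : e (Ideal.Quotient.mk I f') = Ideal.Quotient.mk I' (f' * C c) := by
      have : Ideal.Quotient.mk I f' = f' • (Ideal.Quotient.mk I 1) := by
        rw [hsm, mul_one]
      rw [this, map_smul, ← hpe]
      show f' • (Ideal.Quotient.mk I' (C c)) = _
      rw [hsm]
    have hzero : Ideal.Quotient.mk I' (f' * C c) = 0 := by
      rw [Ideal.Quotient.eq_zero_iff_mem]
      exact Ideal.mul_mem_right _ _ (Ideal.subset_span rfl)
    have : Ideal.Quotient.mk I f' = 0 := by
      apply e.injective
      rw [hkey, hzero, e.map_zero]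
    rw [Ideal.Quotient.eq_zero_iff_mem, hI, Ideal.mem_span_singleton] at this
    exact aux_dvd k a' b' hb'pos α β α' β' hβ this
  · intro hrel
    have h1 : β * (β' * β⁻¹) = β' := by field_simp
    have h2 : α * (β' * β⁻¹) = α' := by
      field_simp
      linear_combination hrel
    have hu : IsUnit (C (β' * β⁻¹) : MvPolynomial (Fin 2) k) := by
      refine IsUnit.map C (isUnit_iff_ne_zero.mpr ?_)
      exact mul_ne_zero hβ' (inv_ne_zero hβ)
    have key : f * C (β' * β⁻¹) = f' := by
      rw [hf, hf', sub_mul, mul_right_comm (C β), ← C_mul, h1, mul_right_comm (C α), ← C_mul, h2]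
    have hassoc : Associated f f' := by
      refine ⟨hu.unit, ?_⟩
      rw [IsUnit.unit_spec]
      exact key
    have hIeq : Ideal.span {f} = Ideal.span {f'} :=
      Ideal.span_singleton_eq_span_singleton.mpr hassoc
    exact ⟨(Ideal.quotientEquivAlgOfEq (MvPolynomial (Fin 2) k) hIeq).toLinearEquiv,
      fun n x => aux_eq k a b _ _ hIeq n x⟩
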